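/- arXiv:1601.00198 — 2 statements merged into one kernel-verified Lean document; each statement's English description precedes it below -/
import Mathlib

section
/- Consider a packing integer program (P) and a partition J of the column index set of A such that the packing interaction graph G^{pack}_{A,J} is a cycle of length K. Then: (1) if K = 3k with k ∈ ℤ_{++}, z^{N.S.} ≤ (3/2) · z^I; (2) if K = 3k+1 with k ∈ ℤ_{++}, z^{N.S.} ≤ ((3k+1)/(2k)) · z^I; (3) if K = 3k+2 with k ∈ ℤ_{++}, z^{N.S.} ≤ ((3k+2)/(2k+1)) · z^I. -/
/-!
Let `U` be a set of blocks on which the interaction graph induces a disjoint union of edges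
and isolated nodes, each component lying in some `V^i`, and let `c_U` be the objective
restricted to the columns of `U`. A point `x` of the natural sparse closure satisfies every valid
cut supported on a single component, so for each component there is a point of `P` nearly
matching the component's share of `c_U x`. These points can be glued into one point of `P`,
because no row meets two components; hence `c_U x ≤ z^I`.

On a cycle of length `K` take `U = {0, 1, 3, 4, 6, 7, …}` up to `3k` (with the node `3k` added
when `K = 3k + 2`), of size `2k` or `2k + 1`. Every rotation of `U` is again such a set, and
summing `c_U x ≤ z^I` over the `K` rotations counts every block `|U|` times:
`|U| · c x ≤ K · z^I`.
-/

open Finset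

/-- The dot product `cᵀx` of two vectors in `ℚⁿ`. -/
def dotp {n : ℕ} (c x : Fin n → ℚ) : ℚ := ∑ j, c j * x j

/-- The feasible region `P` of the MILP `Ax ≤ b`, `x ≥ 0`, `x_j ∈ ℤ` for `j ∈ L`. -/
def mipSet {m n : ℕ} (A : Matrix (Fin m) (Fin n) ℚ) (b : Fin m → ℚ)
    (L : Finset (Fin n)) : Set (Fin n → ℚ) :=
  {x | (∀ i, ∑ j, A i j * x j ≤ b i) ∧ (∀ j, 0 ≤ x j) ∧ ∀ j ∈ L, ∃ z : ℤ, x j = (z : ℚ)}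

/-- The LP relaxation `P^LP`. -/
def lpSet {m n : ℕ} (A : Matrix (Fin m) (Fin n) ℚ) (b : Fin m → ℚ) : Set (Fin n → ℚ) :=
  {x | (∀ i, ∑ j, A i j * x j ≤ b i) ∧ (∀ j, 0 ≤ x j)}

/-- The integer hull `P^I = conv(P)`. -/
def intHull {m n : ℕ} (A : Matrix (Fin m) (Fin n) ℚ) (b : Fin m → ℚ)
    (L : Finset (Fin n)) : Set (Fin n → ℚ) :=
  convexHull ℚ (mipSet A b L)

/-- The sparse closure `P^(N)`: the LP relaxation intersected with all halfspaces
`αᵀx ≤ β` that are valid for `P^I` and whose support is contained in `N`. -/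
def sparseClosure {m n : ℕ} (A : Matrix (Fin m) (Fin n) ℚ) (b : Fin m → ℚ)
    (L : Finset (Fin n)) (N : Set (Fin n)) : Set (Fin n → ℚ) :=
  lpSet A b ∩
    ⋂ (α : Fin n → ℚ) (β : ℚ)
      (_ : (∀ x ∈ intHull A b L, dotp α x ≤ β) ∧ ∀ j, α j ≠ 0 → j ∈ N),
      {x | dotp α x ≤ β}

/-- The packing interaction graph of `A` w.r.t. the partition of columns given by
`π : Fin n → Fin q` (part `J_u = π⁻¹(u)`): nodes `u ≠ v` are adjacent iff some row of `A`
has nonzero entries in a column of `J_u` and in a column of `J_v`. -/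
def packGraph {m n q : ℕ} (A : Matrix (Fin m) (Fin n) ℚ) (π : Fin n → Fin q) :
    SimpleGraph (Fin q) where
  Adj u v := u ≠ v ∧ ∃ i a₁ a₂, π a₁ = u ∧ π a₂ = v ∧ A i a₁ ≠ 0 ∧ A i a₂ ≠ 0
  symm := by
    constructor
    rintro u v ⟨huv, i, a₁, a₂, h1, h2, h3, h4⟩
    exact ⟨huv.symm, i, a₂, a₁, h2, h1, h4, h3⟩
  loopless := by
    constructor
    rintro u ⟨h, -⟩
    exact h rfl

/-- The sparse closure `P^(S)` for a set `S` of nodes of the packing interaction graph. -/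
def blockClosure {m n q : ℕ} (A : Matrix (Fin m) (Fin n) ℚ) (b : Fin m → ℚ)
    (L : Finset (Fin n)) (π : Fin n → Fin q) (S : Finset (Fin q)) : Set (Fin n → ℚ) :=
  sparseClosure A b L {j | π j ∈ S}

/-- The column block-sparse closure `P^{𝒱,P} = ⋂_{S ∈ 𝒱} P^(S)` for a support list `𝒱`. -/
def listClosure {m n q : ℕ} (A : Matrix (Fin m) (Fin n) ℚ) (b : Fin m → ℚ)
    (L : Finset (Fin n)) (π : Fin n → Fin q) (𝒱 : Finset (Finset (Fin q))) :
    Set (Fin n → ℚ) :=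
  ⋂ S ∈ 𝒱, blockClosure A b L π S

/-- The super sparse closure `P^{S.S.}`: support list of all singletons. -/
def superSparseClosure {m n q : ℕ} (A : Matrix (Fin m) (Fin n) ℚ) (b : Fin m → ℚ)
    (L : Finset (Fin n)) (π : Fin n → Fin q) : Set (Fin n → ℚ) :=
  ⋂ u : Fin q, blockClosure A b L π {u}

/-- The natural sparse closure `P^{N.S.}`: for each row `i` of `A`, add all cuts supported
on the variables of the blocks touched by row `i`. -/
def naturalSparseClosure {m n q : ℕ} (A : Matrix (Fin m) (Fin n) ℚ) (b : Fin m → ℚ)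
    (L : Finset (Fin n)) (π : Fin n → Fin q) : Set (Fin n → ℚ) :=
  ⋂ i : Fin m, sparseClosure A b L {j | ∃ j', π j' = π j ∧ A i j' ≠ 0}

/-- A mixed stable set of `G` subordinate to the collection `𝒱`: a collection `M` of subsets
of vertices, each contained in a member of `𝒱`, pairwise disjoint, with no edge of `G`
between distinct members. -/
def MixedStableSet {V : Type*} (G : SimpleGraph V) (𝒱 : Set (Finset V))
    (M : Finset (Finset V)) : Prop :=
  (∀ s ∈ M, ∃ t ∈ 𝒱, s ⊆ t) ∧
  (∀ s ∈ M, ∀ t ∈ M, s ≠ t → Disjoint s t) ∧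
  (∀ s ∈ M, ∀ t ∈ M, s ≠ t → ∀ u ∈ s, ∀ v ∈ t, ¬ G.Adj u v)

section SparseCuts

variable {m n q : ℕ} {A : Matrix (Fin m) (Fin n) ℚ} {b : Fin m → ℚ} {L : Finset (Fin n)}

def blockObjective (c : Fin n → ℚ) (π : Fin n → Fin q) (S : Finset (Fin q)) : Fin n → ℚ :=
  fun j => if π j ∈ S then c j else 0

/-- The set `V^i` of the paper. -/
def rowBlocks (A : Matrix (Fin m) (Fin n) ℚ) (π : Fin n → Fin q) (i : Fin m) : Finset (Fin q) :=
  {u | ∃ j, π j = u ∧ A i j ≠ 0}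

lemma naturalSparseClosure_eq_iInter_blockClosure (π : Fin n → Fin q) :
    naturalSparseClosure A b L π = ⋂ i, blockClosure A b L π (rowBlocks A π i) := by
  simp [naturalSparseClosure, blockClosure, rowBlocks]

lemma exists_rowBlocks_pair_subset {π : Fin n → Fin q} {u v : Fin q}
    (h : (packGraph A π).Adj u v) : ∃ i, {u, v} ⊆ rowBlocks A π i := by
  obtain ⟨-, i, j₁, j₂, rfl, rfl, h₁, h₂⟩ := h
  refine ⟨i, ?_⟩
  simp only [insert_subset_iff, singleton_subset_iff, rowBlocks, mem_filter, mem_univ, true_and]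
  exact ⟨⟨j₁, rfl, h₁⟩, ⟨j₂, rfl, h₂⟩⟩

lemma dotp_le_of_mem_intHull {α x : Fin n → ℚ} {β : ℚ}
    (h : ∀ y ∈ mipSet A b L, dotp α y ≤ β) (hx : x ∈ intHull A b L) : dotp α x ≤ β :=
  convexHull_min h (convex_halfSpace_le ⟨dotProduct_add α, fun r x => dotProduct_smul r α x⟩ β) hx

lemma exists_mem_mipSet_lt_dotp_of_mem_sparseClosure {N : Set (Fin n)} {α x : Fin n → ℚ}
    {β : ℚ}
    (hx : x ∈ sparseClosure A b L N) (hα : ∀ j, α j ≠ 0 → j ∈ N) (hβ : β < dotp α x) :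
    ∃ y ∈ mipSet A b L, β < dotp α y := by
  by_contra! h
  have hcut : x ∈ {x | dotp α x ≤ β} :=
    Set.mem_iInter₂.1 (Set.mem_iInter.1 hx.2 α) β ⟨fun y hy => dotp_le_of_mem_intHull h hy, hα⟩
  exact hβ.not_ge hcut

end SparseCuts

section Gluing

variable {m n q : ℕ} {A : Matrix (Fin m) (Fin n) ℚ} {b : Fin m → ℚ} {L : Finset (Fin n)}
  {π : Fin n → Fin q} {ι : Type*}

def glue (π : Fin n → Fin q) (U : Finset (Fin q)) (ρ : Fin q → ι) (y : ι → Fin n → ℚ) :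
    Fin n → ℚ :=
  fun j => if π j ∈ U then y (ρ (π j)) j else 0

lemma glue_mem_mipSet (hA : ∀ i j, 0 ≤ A i j) (hb : ∀ i, 0 ≤ b i) {U : Finset (Fin q)}
    {ρ : Fin q → ι} (hρ : ∀ u ∈ U, ∀ v ∈ U, (packGraph A π).Adj u v → ρ u = ρ v)
    {y : ι → Fin n → ℚ} (hy : ∀ u ∈ U, y (ρ u) ∈ mipSet A b L) :
    glue π U ρ y ∈ mipSet A b L := by
  refine ⟨fun i => ?_, fun j => ?_, fun j hj => ?_⟩
  · by_cases hrow : ∃ j₀, π j₀ ∈ U ∧ A i j₀ ≠ 0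
    · obtain ⟨j₀, hj₀, hAj₀⟩ := hrow
      -- a row meets the blocks of a single label, by separation
      have hterm : ∀ j, A i j * glue π U ρ y j ≤ A i j * y (ρ (π j₀)) j := by
        intro j
        unfold glue
        split_ifs with hj
        · by_cases hAj : A i j = 0
          · simp [hAj]
          by_cases hπ : π j = π j₀
          · rw [hπ]
          · rw [hρ _ hj _ hj₀ ⟨hπ, i, j, j₀, rfl, rfl, hAj, hAj₀⟩]
        · simpa using mul_nonneg (hA i j) ((hy _ hj₀).2.1 j)
      exact (sum_le_sum fun j _ => hterm j).trans ((hy _ hj₀).1 i)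
    · push Not at hrow
      rw [sum_eq_zero fun j _ => ?_]
      · exact hb i
      by_cases hj : π j ∈ U
      · simp [hrow j hj]
      · simp [glue, hj]
  · unfold glue
    split_ifs with hj
    exacts [(hy _ hj).2.1 j, le_rfl]
  · unfold glue
    split_ifs with hU
    exacts [(hy _ hU).2.2 j hj, ⟨0, by simp⟩]

lemma dotp_glue [DecidableEq ι] (c : Fin n → ℚ) (U : Finset (Fin q)) (ρ : Fin q → ι)
    (y : ι → Fin n → ℚ) :
    dotp c (glue π U ρ y) =
      ∑ ℓ ∈ U.image ρ, dotp (blockObjective c π {u ∈ U | ρ u = ℓ}) (y ℓ) := by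
  simp only [dotp, blockObjective, glue, mem_filter]
  rw [sum_comm]
  refine sum_congr rfl fun j _ => ?_
  by_cases hj : π j ∈ U
  · simp [hj, eq_comm (a := ρ (π j)), mem_image_of_mem ρ hj]
  · simp [hj]

lemma dotp_glue_const (c : Fin n → ℚ) (U : Finset (Fin q)) (ρ : Fin q → ι) (x : Fin n → ℚ) :
    dotp c (glue π U ρ fun _ => x) = dotp (blockObjective c π U) x := by
  simp only [dotp, blockObjective, glue]
  refine sum_congr rfl fun j _ => ?_
  split_ifs <;> ring

end Gluing

theorem dotp_blockObjective_le_of_mem_naturalSparseClosure {m n q : ℕ} {ι : Type*}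
    [DecidableEq ι] {A : Matrix (Fin m) (Fin n) ℚ} {b : Fin m → ℚ} {c : Fin n → ℚ}
    {L : Finset (Fin n)} {π : Fin n → Fin q} {xI x : Fin n → ℚ}
    (hA : ∀ i j, 0 ≤ A i j) (hb : ∀ i, 0 ≤ b i)
    (hxImax : ∀ x ∈ intHull A b L, dotp c x ≤ dotp c xI)
    {U : Finset (Fin q)} {ρ : Fin q → ι}
    (hρ : ∀ u ∈ U, ∀ v ∈ U, (packGraph A π).Adj u v → ρ u = ρ v)
    (hcover : ∀ u ∈ U, ∃ i, {v ∈ U | ρ v = ρ u} ⊆ rowBlocks A π i)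
    (hx : x ∈ naturalSparseClosure A b L π) :
    dotp (blockObjective c π U) x ≤ dotp c xI := by
  rw [naturalSparseClosure_eq_iInter_blockClosure, Set.mem_iInter] at hx
  refine le_of_forall_pos_lt_add fun ε hε => ?_
  set s := U.image ρ
  set δ := ε / (#s + 1)
  have hδ : 0 < δ := by positivity
  have hy : ∀ ℓ ∈ s, ∃ y ∈ mipSet A b L,
      dotp (blockObjective c π {u ∈ U | ρ u = ℓ}) x - δ <
        dotp (blockObjective c π {u ∈ U | ρ u = ℓ}) y := by
    intro ℓ hℓ
    obtain ⟨u, hu, rfl⟩ := mem_image.1 hℓ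
    obtain ⟨i, hi⟩ := hcover u hu
    refine exists_mem_mipSet_lt_dotp_of_mem_sparseClosure (hx i) (fun j hj => hi ?_) (by linarith)
    by_contra h
    exact hj (if_neg h)
  choose! y hyU hyδ using hy
  calc dotp (blockObjective c π U) x
      = ∑ ℓ ∈ s, dotp (blockObjective c π {u ∈ U | ρ u = ℓ}) x := by
        rw [← dotp_glue_const c U ρ x, dotp_glue]
    _ ≤ ∑ ℓ ∈ s, (dotp (blockObjective c π {u ∈ U | ρ u = ℓ}) (y ℓ) + δ) :=
        sum_le_sum fun ℓ hℓ => by linarith [hyδ ℓ hℓ]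
    _ = dotp c (glue π U ρ y) + #s * δ := by
        rw [sum_add_distrib, dotp_glue, sum_const, nsmul_eq_mul]
    _ < dotp c xI + ε := by
        have hglue : glue π U ρ y ∈ mipSet A b L :=
          glue_mem_mipSet hA hb hρ fun u hu => hyU _ (mem_image_of_mem ρ hu)
        have hsδ : #s * δ < ε := by
          have : (#s + 1 : ℚ) * δ = ε := by simp only [δ]; field_simp
          linarith
        linarith [hxImax _ (subset_convexHull ℚ _ hglue)]

section Relabel

variable {m n q q' : ℕ} {A : Matrix (Fin m) (Fin n) ℚ} {π : Fin n → Fin q}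

lemma naturalSparseClosure_comp (b : Fin m → ℚ) (L : Finset (Fin n)) {σ : Fin q → Fin q'}
    (hσ : Function.Injective σ) :
    naturalSparseClosure A b L (σ ∘ π) = naturalSparseClosure A b L π := by
  simp [naturalSparseClosure, hσ.eq_iff]

lemma packGraph_comp_iso {G : SimpleGraph (Fin q')} (e : packGraph A π ≃g G) :
    packGraph A (e ∘ π) = G := by
  ext u v
  rw [← e.symm.map_adj_iff]
  change _ ∧ _ ↔ _ ∧ _
  simp only [Function.comp_apply, e.symm.injective.ne_iff, e.eq_symm_apply]

end Relabel

section Cycle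

open SimpleGraph

def cycleGraphSubRight {K : ℕ} [NeZero K] (t : Fin K) : cycleGraph K ≃g cycleGraph K where
  toEquiv := Equiv.subRight t
  map_rel_iff' {_ _} := by
    simp only [cycleGraph_adj', Equiv.subRight_apply, sub_sub_sub_cancel_right]

/-- Pairs of consecutive nodes separated by single gaps. If `N = K`, the wrap-around edge
`(K - 1, 0)` must fall in a gap too, which needs `3 ∣ K`. -/
def cycleStableSet (K N : ℕ) : Finset (Fin K) := {a | a.val < N ∧ a.val % 3 ≠ 2}

lemma div_three_eq_of_cycleGraph_adj {K N : ℕ} (hNK : N ≤ K) (hwrap : N = K → 3 ∣ K)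
    {u v : Fin K} (hu : u ∈ cycleStableSet K N) (hv : v ∈ cycleStableSet K N)
    (h : (cycleGraph K).Adj u v) : u.val / 3 = v.val / 3 := by
  simp only [cycleStableSet, mem_filter, mem_univ, true_and] at hu hv
  rw [cycleGraph_adj'] at h
  rcases lt_trichotomy u v with huv | rfl | huv
  · rw [Fin.coe_sub_iff_lt.2 huv, Fin.coe_sub_iff_le.2 huv.le] at h
    have := Fin.lt_def.1 huv
    omega
  · rfl
  · rw [Fin.coe_sub_iff_le.2 huv.le, Fin.coe_sub_iff_lt.2 huv] at h
    have := Fin.lt_def.1 huv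
    omega

lemma exists_cycleStableSet_filter_subset_rowBlocks {m n K : ℕ} {A : Matrix (Fin m) (Fin n) ℚ}
    {π : Fin n → Fin K} (hG : packGraph A π = cycleGraph K) (hK : 2 ≤ K) (N : ℕ) (u : Fin K) :
    ∃ i, {v ∈ cycleStableSet K N | v.val / 3 = u.val / 3} ⊆ rowBlocks A π i := by
  have : NeZero K := ⟨by omega⟩
  set w : Fin K := ⟨3 * (u.val / 3), by omega⟩
  have hw : (packGraph A π).Adj w (w + 1) := by
    rw [hG, cycleGraph_adj']
    right
    simp [Nat.mod_eq_of_lt (show 1 < K by omega)]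
  obtain ⟨i, hi⟩ := exists_rowBlocks_pair_subset hw
  refine ⟨i, fun v hv => hi ?_⟩
  simp only [cycleStableSet, mem_filter, mem_univ, true_and] at hv
  have hv3 : v.val = w.val ∨ v.val = w.val + 1 := by simp only [w]; omega
  rcases hv3 with hv3 | hv3
  · simp [Fin.ext hv3]
  · have : v = w + 1 := Fin.ext (by rw [Fin.val_add_one_of_lt' (by omega), hv3])
    simp [this]

lemma count_mod_three_ne_two (k r : ℕ) (hr : r ≤ 1) :
    Nat.count (· % 3 ≠ 2) (3 * k + r) = 2 * k + r := by
  induction k with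
  | zero => interval_cases r <;> decide
  | succ k ih =>
    rw [show 3 * (k + 1) + r = 3 * k + r + 3 by ring, Nat.count_add, ih]
    simp only [Nat.count_succ, Nat.count_zero]
    split_ifs <;> omega

lemma card_cycleStableSet {K N : ℕ} (hNK : N ≤ K) :
    #(cycleStableSet K N) = Nat.count (· % 3 ≠ 2) N := by
  rw [Nat.count_eq_card_filter_range, ← card_map Fin.valEmbedding]
  congr 1
  ext a
  simp only [cycleStableSet, mem_map, mem_filter, mem_univ, true_and, mem_range,
    Fin.valEmbedding_apply]
  constructor
  · rintro ⟨a, h, rfl⟩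
    exact h
  · rintro h
    exact ⟨⟨a, by omega⟩, h, rfl⟩

lemma sum_dotp_blockObjective_sub_right {n K : ℕ} [NeZero K] (c x : Fin n → ℚ)
    (π : Fin n → Fin K) (S : Finset (Fin K)) :
    ∑ t, dotp (blockObjective c (fun j => π j - t) S) x = #S * dotp c x := by
  simp only [dotp, blockObjective, mul_sum]
  rw [sum_comm]
  refine sum_congr rfl fun j _ => ?_
  have hcount : ∑ t : Fin K, (if π j - t ∈ S then 1 else 0 : ℚ) = #S := by
    rw [Fintype.sum_equiv (Equiv.subLeft (π j)) (fun t => if π j - t ∈ S then (1 : ℚ) else 0)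
      (fun t => if t ∈ S then 1 else 0) fun t => rfl, sum_boole, filter_mem_eq_inter, univ_inter]
  simp_rw [ite_mul, zero_mul, ← hcount, sum_mul, ite_mul, one_mul, zero_mul]

theorem card_cycleStableSet_mul_dotp_le {m n K N : ℕ} {A : Matrix (Fin m) (Fin n) ℚ}
    {b : Fin m → ℚ} {c : Fin n → ℚ} {L : Finset (Fin n)} {π : Fin n → Fin K} {xI x : Fin n → ℚ}
    (hA : ∀ i j, 0 ≤ A i j) (hb : ∀ i, 0 ≤ b i)
    (hxImax : ∀ x ∈ intHull A b L, dotp c x ≤ dotp c xI)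
    (e : packGraph A π ≃g cycleGraph K) (hK : 2 ≤ K) (hNK : N ≤ K) (hwrap : N = K → 3 ∣ K)
    (hx : x ∈ naturalSparseClosure A b L π) :
    #(cycleStableSet K N) * dotp c x ≤ K * dotp c xI := by
  have : NeZero K := ⟨by omega⟩
  have hrot : ∀ t, dotp (blockObjective c (fun j => e (π j) - t) (cycleStableSet K N)) x ≤
      dotp c xI := by
    intro t
    have hG : packGraph A ((cycleGraphSubRight t).comp e ∘ π) = cycleGraph K :=
      packGraph_comp_iso _
    refine dotp_blockObjective_le_of_mem_naturalSparseClosure hA hb hxImax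
      (U := cycleStableSet K N) (ρ := fun u => u.val / 3)
      (fun u hu v hv h => div_three_eq_of_cycleGraph_adj hNK hwrap hu hv (hG ▸ h))
      (fun u _ => exists_cycleStableSet_filter_subset_rowBlocks hG hK N u) ?_
    rwa [← naturalSparseClosure_comp b L ((cycleGraphSubRight t).comp e).injective] at hx
  calc (#(cycleStableSet K N) : ℚ) * dotp c x
      = ∑ t, dotp (blockObjective c (fun j => e (π j) - t) (cycleStableSet K N)) x :=
        (sum_dotp_blockObjective_sub_right c x (e ∘ π) _).symm
    _ ≤ ∑ _t : Fin K, dotp c xI := sum_le_sum fun t _ => hrot t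
    _ = K * dotp c xI := by simp

end Cycle

theorem packing_naturalSparse_cycle_bound_general
    {m n K : ℕ}
    (A : Matrix (Fin m) (Fin n) ℚ) (b : Fin m → ℚ) (c : Fin n → ℚ) (L : Finset (Fin n))
    (hA : ∀ i j, 0 ≤ A i j) (hb : ∀ i, 0 ≤ b i)
    (π : Fin n → Fin K)
    (hcycle : Nonempty (packGraph A π ≃g SimpleGraph.cycleGraph K))
    (xI : Fin n → ℚ)
    (hxImax : ∀ x ∈ intHull A b L, dotp c x ≤ dotp c xI) :
    (∀ k : ℕ, 0 < k → K = 3 * k →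
      ∀ x ∈ naturalSparseClosure A b L π, dotp c x ≤ (3 / 2 : ℚ) * dotp c xI) ∧
    (∀ k : ℕ, 0 < k → K = 3 * k + 1 →
      ∀ x ∈ naturalSparseClosure A b L π,
        dotp c x ≤ ((3 * (k : ℚ) + 1) / (2 * (k : ℚ))) * dotp c xI) ∧
    (∀ k : ℕ, 0 < k → K = 3 * k + 2 →
      ∀ x ∈ naturalSparseClosure A b L π,
        dotp c x ≤ ((3 * (k : ℚ) + 2) / (2 * (k : ℚ) + 1)) * dotp c xI) := by
  obtain ⟨e⟩ := hcycle
  have bound : ∀ k r, 0 < k → r ≤ 1 → 3 * k + r ≤ K → (3 * k + r = K → 3 ∣ K) →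
      ∀ x ∈ naturalSparseClosure A b L π, (2 * k + r : ℚ) * dotp c x ≤ K * dotp c xI := by
    intro k r hk hr hN hwrap x hx
    have h := card_cycleStableSet_mul_dotp_le hA hb hxImax e (by omega) hN hwrap hx
    rwa [card_cycleStableSet hN, count_mod_three_ne_two k r hr, Nat.cast_add, Nat.cast_mul,
      Nat.cast_ofNat] at h
  refine ⟨fun k hk hK x hx => ?_, fun k hk hK x hx => ?_, fun k hk hK x hx => ?_⟩
  all_goals have hk' : (0 : ℚ) < k := by exact_mod_cast hk
  · have h := bound k 0 hk (by omega) (by omega) (by omega) x hx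
    rw [hK] at h
    push_cast at h
    nlinarith
  · have h := bound k 0 hk (by omega) (by omega) (by omega) x hx
    rw [hK] at h
    push_cast at h
    rw [div_mul_eq_mul_div, le_div_iff₀ (by positivity)]
    linarith
  · have h := bound k 1 hk (by omega) (by omega) (by omega) x hx
    rw [hK] at h
    push_cast at h
    rw [div_mul_eq_mul_div, le_div_iff₀ (by positivity)]
    linarith

/-- **Theorem (natural sparse closure of cycles, upper bounds).** If the packing interaction
graph is a cycle of length `K`, then `z^{N.S.} ≤ (3/2)·z^I` if `K = 3k`,
`z^{N.S.} ≤ ((3k+1)/(2k))·z^I` if `K = 3k+1`, and `z^{N.S.} ≤ ((3k+2)/(2k+1))·z^I`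
if `K = 3k+2` (for `k ∈ ℤ_{++}`). -/
theorem packing_naturalSparse_cycle_bound
    {m n K : ℕ}
    (A : Matrix (Fin m) (Fin n) ℚ) (b : Fin m → ℚ) (c : Fin n → ℚ) (L : Finset (Fin n))
    (hA : ∀ i j, 0 ≤ A i j) (hb : ∀ i, 0 ≤ b i) (hc : ∀ j, 0 ≤ c j)
    (π : Fin n → Fin K) (hπ : Function.Surjective π)
    (hK : 3 ≤ K)
    (hcycle : Nonempty (packGraph A π ≃g SimpleGraph.cycleGraph K))
    (xI : Fin n → ℚ) (hxI : xI ∈ intHull A b L)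
    (hxImax : ∀ x ∈ intHull A b L, dotp c x ≤ dotp c xI) :
    (∀ k : ℕ, 0 < k → K = 3 * k →
      ∀ x ∈ naturalSparseClosure A b L π, dotp c x ≤ (3 / 2 : ℚ) * dotp c xI) ∧
    (∀ k : ℕ, 0 < k → K = 3 * k + 1 →
      ∀ x ∈ naturalSparseClosure A b L π,
        dotp c x ≤ ((3 * (k : ℚ) + 1) / (2 * (k : ℚ))) * dotp c xI) ∧
    (∀ k : ℕ, 0 < k → K = 3 * k + 2 →
      ∀ x ∈ naturalSparseClosure A b L π,
        dotp c x ≤ ((3 * (k : ℚ) + 2) / (2 * (k : ℚ) + 1)) * dotp c xI) :=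
  packing_naturalSparse_cycle_bound_general A b c L hA hb π hcycle xI hxImax
end

section
/- For every constant M > 0 there exists a covering integer program (C) and a partition J = {J_1, J_2} of its column index set [n] such that z^I > M · z^{S.S.}, where z^{S.S.} is the optimal value of min c^T x over P^{(J_1)} ∩ P^{(J_2)} and z^I is the integer optimal value. -/
open Finset

/-- The feasible region `P` of the covering MILP `Ax ≥ b`, `x ≥ 0`, `x_j ∈ ℤ` for `j ∈ L`. -/
def covSet {m n : ℕ} (A : Matrix (Fin m) (Fin n) ℚ) (b : Fin m → ℚ)
    (L : Finset (Fin n)) : Set (Fin n → ℚ) :=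
  {x | (∀ i, b i ≤ ∑ j, A i j * x j) ∧ (∀ j, 0 ≤ x j) ∧ ∀ j ∈ L, ∃ z : ℤ, x j = (z : ℚ)}

/-- The LP relaxation `P^LP` of the covering MILP. -/
def covLp {m n : ℕ} (A : Matrix (Fin m) (Fin n) ℚ) (b : Fin m → ℚ) : Set (Fin n → ℚ) :=
  {x | (∀ i, b i ≤ ∑ j, A i j * x j) ∧ (∀ j, 0 ≤ x j)}

/-- The integer hull `P^I = conv(P)`. -/
def covHull {m n : ℕ} (A : Matrix (Fin m) (Fin n) ℚ) (b : Fin m → ℚ)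
    (L : Finset (Fin n)) : Set (Fin n → ℚ) :=
  convexHull ℚ (covSet A b L)

/-- The sparse closure `P^(N)`: the LP relaxation intersected with all halfspaces
`αᵀx ≤ β` that are valid for `P^I` and whose support is contained in `N`. -/
def covSparseClosure {m n : ℕ} (A : Matrix (Fin m) (Fin n) ℚ) (b : Fin m → ℚ)
    (L : Finset (Fin n)) (N : Set (Fin n)) : Set (Fin n → ℚ) :=
  covLp A b ∩
    ⋂ (α : Fin n → ℚ) (β : ℚ)
      (_ : (∀ x ∈ covHull A b L, dotp α x ≤ β) ∧ ∀ j, α j ≠ 0 → j ∈ N),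
      {x | dotp α x ≤ β}

/-- The covering interaction graph of `A` w.r.t. the partition of the rows given by
`ρ : Fin m → Fin p` (part `I_u = ρ⁻¹(u)`): nodes `u ≠ v` are adjacent iff some column of
`A` has nonzero entries in a row of `I_u` and in a row of `I_v`. -/
def covGraph {m n p : ℕ} (A : Matrix (Fin m) (Fin n) ℚ) (ρ : Fin m → Fin p) :
    SimpleGraph (Fin p) where
  Adj u v := u ≠ v ∧ ∃ j i₁ i₂, ρ i₁ = u ∧ ρ i₂ = v ∧ A i₁ j ≠ 0 ∧ A i₂ j ≠ 0
  symm := by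
    constructor
    rintro u v ⟨huv, j, i₁, i₂, h1, h2, h3, h4⟩
    exact ⟨huv.symm, j, i₂, i₁, h2, h1, h4, h3⟩
  loopless := by
    constructor
    rintro u ⟨h, -⟩
    exact h rfl

/-- The sparse closure `P^(S)` for a set `S` of nodes of the covering interaction graph:
cuts supported on the union of the supports of the rows in the parts of `S`. -/
def covRowClosure {m n p : ℕ} (A : Matrix (Fin m) (Fin n) ℚ) (b : Fin m → ℚ)
    (L : Finset (Fin n)) (ρ : Fin m → Fin p) (S : Finset (Fin p)) : Set (Fin n → ℚ) :=
  covSparseClosure A b L {j | ∃ i, ρ i ∈ S ∧ A i j ≠ 0}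

/-- The row block-sparse closure `P^{𝒱,C} = ⋂_{S ∈ 𝒱} P^(S)` for a row support list `𝒱`. -/
def covListClosure {m n p : ℕ} (A : Matrix (Fin m) (Fin n) ℚ) (b : Fin m → ℚ)
    (L : Finset (Fin n)) (ρ : Fin m → Fin p) (𝒱 : Finset (Finset (Fin p))) :
    Set (Fin n → ℚ) :=
  ⋂ S ∈ 𝒱, covRowClosure A b L ρ S

/- In a covering program (`A ≥ 0`) with integer variables, `P` is closed under increasing any
coordinate by a natural number, so every inequality `αᵀx ≤ β` valid for `P^I` has `α ≤ 0`. If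
moreover `P` contains a point vanishing on `N`, a cut supported on `N` has `β ≥ 0`, hence
`αᵀx ≤ 0 ≤ β` on all of `P^LP`: such sparse cuts cut off nothing. For the program
`min x₁ + x₂` subject to `x₁ + x₂ ≥ ε`, `x ∈ ℤ²₊`, the points `e₁` and `e₂` show that
`P^({1}) ∩ P^({2}) = P^LP`, so `z^{S.S.} = ε` while `z^I = 1`; take `ε < 1 / M`. -/

lemma dotp_eq_dotProduct {n : ℕ} (c x : Fin n → ℚ) : dotp c x = c ⬝ᵥ x := rfl

lemma isLinearMap_dotp {n : ℕ} (c : Fin n → ℚ) : IsLinearMap ℚ (dotp c) :=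
  ⟨dotProduct_add c, fun r x => dotProduct_smul r c x⟩

lemma dotp_single {n : ℕ} (c : Fin n → ℚ) (j : Fin n) (t : ℚ) :
    dotp c (Pi.single j t) = c j * t := by
  rw [dotp_eq_dotProduct, dotProduct_single]

section Covering

variable {m n : ℕ} {A : Matrix (Fin m) (Fin n) ℚ} {b : Fin m → ℚ} {L : Finset (Fin n)}

lemma add_single_natCast_mem_covSet (hA : ∀ i j, 0 ≤ A i j) {x : Fin n → ℚ}
    (hx : x ∈ covSet A b L) (j : Fin n) (k : ℕ) :
    x + Pi.single j (k : ℚ) ∈ covSet A b L := by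
  obtain ⟨hcov, hnonneg, hint⟩ := hx
  have hsingle_nonneg : ∀ j', 0 ≤ Pi.single (M := fun _ => ℚ) j (k : ℚ) j' :=
    Pi.single_nonneg.mpr k.cast_nonneg
  refine ⟨fun i => ?_, fun j' => add_nonneg (hnonneg j') (hsingle_nonneg j'), fun j' hj' => ?_⟩
  · have hAi : 0 ≤ ∑ j', A i j' * Pi.single (M := fun _ => ℚ) j (k : ℚ) j' :=
      sum_nonneg fun j' _ => mul_nonneg (hA i j') (hsingle_nonneg j')
    simpa only [Pi.add_apply, mul_add, sum_add_distrib] using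
      le_add_of_le_of_nonneg (hcov i) hAi
  · obtain ⟨z, hz⟩ := hint j' hj'
    rcases eq_or_ne j' j with rfl | hne
    · exact ⟨z + k, by simp [hz]⟩
    · exact ⟨z, by simp [Pi.single_eq_of_ne hne, hz]⟩

lemma le_dotp_of_mem_covHull {c x : Fin n → ℚ} {z : ℚ}
    (hP : ∀ y ∈ covSet A b L, z ≤ dotp c y) (hx : x ∈ covHull A b L) : z ≤ dotp c x :=
  convexHull_min hP (convex_halfSpace_ge (isLinearMap_dotp c) z) hx

lemma nonpos_of_forall_mem_covHull_dotp_le (hA : ∀ i j, 0 ≤ A i j) {x α : Fin n → ℚ} {β : ℚ}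
    (hx : x ∈ covSet A b L) (hα : ∀ y ∈ covHull A b L, dotp α y ≤ β) (j : Fin n) :
    α j ≤ 0 := by
  by_contra! hαj
  obtain ⟨k, hk⟩ := exists_nat_gt ((β - dotp α x) / α j)
  have hvalid := hα _ (subset_convexHull ℚ _ (add_single_natCast_mem_covSet hA hx j k))
  have hshift : dotp α (x + Pi.single j (k : ℚ)) = dotp α x + α j * k := by
    simp only [dotp_eq_dotProduct, dotProduct_add, dotProduct_single]
  rw [hshift] at hvalid
  rw [div_lt_iff₀ hαj] at hk
  linarith

lemma covLp_subset_covSparseClosure (hA : ∀ i j, 0 ≤ A i j) {N : Set (Fin n)}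
    {p : Fin n → ℚ} (hp : p ∈ covSet A b L) (hpN : ∀ j ∈ N, p j = 0) :
    covLp A b ⊆ covSparseClosure A b L N := by
  intro x hx
  refine ⟨hx, ?_⟩
  simp only [Set.mem_iInter]
  rintro α β ⟨hvalid, hsupp⟩
  have hαp : dotp α p = 0 := sum_eq_zero fun j _ => by
    by_cases hαj : α j = 0
    · rw [hαj, zero_mul]
    · rw [hpN j (hsupp j hαj), mul_zero]
  have hβ : 0 ≤ β := hαp ▸ hvalid p (subset_convexHull ℚ _ hp)
  have hαx : dotp α x ≤ 0 := sum_nonpos fun j _ =>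
    mul_nonpos_of_nonpos_of_nonneg (nonpos_of_forall_mem_covHull_dotp_le hA hp hvalid j) (hx.2 j)
  exact hαx.trans hβ

end Covering

section SingleRow

variable {n : ℕ} {ε : ℚ}

lemma one_le_dotp_one_of_mem_covSet (hε : 0 < ε) {x : Fin n → ℚ}
    (hx : x ∈ covSet (fun _ _ => 1 : Matrix (Fin 1) (Fin n) ℚ) (fun _ => ε) univ) :
    1 ≤ dotp (fun _ => 1) x := by
  choose z hz using fun j => hx.2.2 j (mem_univ j)
  have hsum : dotp (fun _ => 1) x = ((∑ j, z j : ℤ) : ℚ) := by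
    simp only [dotp, one_mul, hz, Int.cast_sum]
  have hpos : (0 : ℚ) < ((∑ j, z j : ℤ) : ℚ) := hsum ▸ hε.trans_le (hx.1 0)
  rw [hsum]
  exact_mod_cast Int.cast_pos.mp hpos

lemma single_mem_covLp_one (j : Fin n) {t : ℚ} (ht : 0 ≤ t) (hεt : ε ≤ t) :
    Pi.single j t ∈ covLp (fun _ _ => 1 : Matrix (Fin 1) (Fin n) ℚ) (fun _ => ε) := by
  refine ⟨fun _ => ?_, Pi.single_nonneg.mpr ht⟩
  simpa only [one_mul, sum_pi_single', mem_univ, if_true] using hεt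

lemma single_one_mem_covSet_one (hε : ε ≤ 1) (j : Fin n) :
    Pi.single j 1 ∈ covSet (fun _ _ => 1 : Matrix (Fin 1) (Fin n) ℚ) (fun _ => ε) univ := by
  obtain ⟨hcov, hnonneg⟩ := single_mem_covLp_one j zero_le_one hε
  refine ⟨hcov, hnonneg, fun j' _ => ?_⟩
  rcases eq_or_ne j' j with rfl | hne
  · exact ⟨1, by simp⟩
  · exact ⟨0, by simp [Pi.single_eq_of_ne hne]⟩

end SingleRow

theorem covering_superSparse_arbitrarily_bad_general (M : ℚ) :
    ∃ (m n : ℕ) (A : Matrix (Fin m) (Fin n) ℚ) (b : Fin m → ℚ) (c : Fin n → ℚ)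
      (L : Finset (Fin n)) (π : Fin n → Fin 2),
      (∀ i j, 0 ≤ A i j) ∧ (∀ i, 0 ≤ b i) ∧ (∀ j, 0 ≤ c j) ∧
      Function.Surjective π ∧
      ∃ xI ∈ covHull A b L,
        (∀ x ∈ covHull A b L, dotp c xI ≤ dotp c x) ∧
        ∃ xS ∈ ⋂ u : Fin 2, covSparseClosure A b L {j | π j = u},
          (∀ x ∈ ⋂ u : Fin 2, covSparseClosure A b L {j | π j = u},
            dotp c xS ≤ dotp c x) ∧
          M * dotp c xS < dotp c xI := by
  set ε : ℚ := (|M| + 1)⁻¹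
  have hM1 : 0 < |M| + 1 := by positivity
  have hε : 0 < ε := inv_pos.mpr hM1
  have hε1 : ε ≤ 1 := inv_le_one_of_one_le₀ (by linarith [abs_nonneg M])
  have hMε : M * ε < 1 := by
    rw [← div_eq_mul_inv, div_lt_one hM1]
    linarith [le_abs_self M]
  set A : Matrix (Fin 1) (Fin 2) ℚ := fun _ _ => 1
  have hA : ∀ i j, 0 ≤ A i j := fun _ _ => zero_le_one
  have hLP : covLp A (fun _ => ε) ⊆ ⋂ u : Fin 2, covSparseClosure A _ univ {j | id j = u} :=
    Set.subset_iInter fun u => covLp_subset_covSparseClosure hA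
      (single_one_mem_covSet_one hε1 (u + 1)) fun j hj => Pi.single_eq_of_ne (by
        obtain rfl : j = u := hj
        fin_cases j <;> decide) 1
  refine ⟨1, 2, A, fun _ => ε, fun _ => 1, univ, id, hA, fun _ => hε.le, fun _ => zero_le_one,
    Function.surjective_id, Pi.single 0 1,
    subset_convexHull ℚ _ (single_one_mem_covSet_one hε1 0), fun x hx => ?_,
    Pi.single 0 ε, hLP (single_mem_covLp_one 0 hε.le le_rfl), fun x hx => ?_, ?_⟩
  · rw [dotp_single, one_mul]
    exact le_dotp_of_mem_covHull (fun y hy => one_le_dotp_one_of_mem_covSet hε hy) hx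
  · rw [dotp_single, one_mul]
    exact (Set.mem_iInter.mp hx 0).1.1 0
  · simpa only [dotp_single, one_mul] using hMε

/-- **Theorem (super sparse cuts can be arbitrarily bad for covering).** For every `M > 0`
there is a covering integer program and a partition `{J₁, J₂}` of its columns (given by a
surjection `π : [n] → Fin 2`) such that `z^I > M · z^{S.S.}`, where `z^{S.S.}` is the
optimum over `P^(J₁) ∩ P^(J₂)`. -/
theorem covering_superSparse_arbitrarily_bad (M : ℚ) (hM : 0 < M) :
    ∃ (m n : ℕ) (A : Matrix (Fin m) (Fin n) ℚ) (b : Fin m → ℚ) (c : Fin n → ℚ)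
      (L : Finset (Fin n)) (π : Fin n → Fin 2),
      (∀ i j, 0 ≤ A i j) ∧ (∀ i, 0 ≤ b i) ∧ (∀ j, 0 ≤ c j) ∧
      Function.Surjective π ∧
      ∃ xI ∈ covHull A b L,
        (∀ x ∈ covHull A b L, dotp c xI ≤ dotp c x) ∧
        ∃ xS ∈ ⋂ u : Fin 2, covSparseClosure A b L {j | π j = u},
          (∀ x ∈ ⋂ u : Fin 2, covSparseClosure A b L {j | π j = u},
            dotp c xS ≤ dotp c x) ∧
          M * dotp c xS < dotp c xI :=
  covering_superSparse_arbitrarily_bad_general M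
end
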